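/- arXiv:2101.03960 — 2 statements merged into one kernel-verified Lean document; each statement's English description precedes it below -/
import Mathlib

section
/- Meyers' Theorem 3': Let a < b and let f : ℝ → ℝ be differentiable at every point of the closed interval [a, b] with derivative f' continuous on [a, b]. If (f(b) - f(a)) * (f(b) - f(a) - (b - a) * f'(a)) < 0, then there exists ξ ∈ (a, b) such that f'(ξ) = (f(b) - f(a)) / (b - ξ). -/
open Set

theorem exists_mem_Ioo_eq_zero_of_mul_neg {α δ : Type*} [ConditionallyCompleteLinearOrder α]
    [TopologicalSpace α] [OrderTopology α] [DenselyOrdered α] [Ring δ] [LinearOrder δ]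
    [IsStrictOrderedRing δ] [TopologicalSpace δ] [OrderClosedTopology δ] {a b : α} {g : α → δ}
    (hab : a ≤ b) (hg : ContinuousOn g (Icc a b)) (hsign : g a * g b < 0) :
    ∃ ξ ∈ Ioo a b, g ξ = 0 := by
  rcases mul_neg_iff.mp hsign with ⟨hga, hgb⟩ | ⟨hga, hgb⟩
  · exact intermediate_value_Ioo' hab hg ⟨hgb, hga⟩
  · exact intermediate_value_Ioo hab hg ⟨hga, hgb⟩

theorem meyers_theorem_3'_general (f f' : ℝ → ℝ) (a b : ℝ) (hab : a < b)
    (hf' : ContinuousOn f' (Set.Icc a b))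
    (hcond : (f b - f a) * (f b - f a - (b - a) * f' a) < 0) :
    ∃ ξ ∈ Set.Ioo a b, f' ξ = (f b - f a) / (b - ξ) := by
  obtain ⟨ξ, hξ, hzero⟩ :=
    exists_mem_Ioo_eq_zero_of_mul_neg (g := fun x ↦ (b - x) * f' x - (f b - f a)) hab.le
      (by fun_prop) (by simp only [sub_self, zero_mul, zero_sub]; linarith)
  refine ⟨ξ, hξ, ?_⟩
  rw [eq_div_iff (sub_pos.2 hξ.2).ne']
  linarith

/-- Meyers' Theorem 3'. -/
theorem meyers_theorem_3' (f f' : ℝ → ℝ) (a b : ℝ) (hab : a < b)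
    (hf : ∀ x ∈ Set.Icc a b, HasDerivWithinAt f (f' x) (Set.Icc a b) x)
    (hf' : ContinuousOn f' (Set.Icc a b))
    (hcond : (f b - f a) * (f b - f a - (b - a) * f' a) < 0) :
    ∃ ξ ∈ Set.Ioo a b, f' ξ = (f b - f a) / (b - ξ) :=
  meyers_theorem_3'_general f f' a b hab hf' hcond
end

section
/- Cauchy version of Flett's theorem: Let a < b and let f, g : ℝ → ℝ be differentiable at every point of the closed interval [a, b], with g'(x) ≠ 0 for all x ∈ [a, b] and f'(a)/g'(a) = f'(b)/g'(b). Then there exists ξ ∈ (a, b) such that (f(ξ) - f(a)) / (g(ξ) - g(a)) = f'(ξ) / g'(ξ). -/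
open Set Filter Topology Function

/-!
Flett's argument applied to the Cauchy quotient. By Darboux, `g'` has constant sign on `[a, b]`;
replacing `f, g` by `-f, -g` we may take it positive, so that `g` is strictly increasing. The
quotient `F x = (f x - f a) / (g x - g a)`, extended by `F a = f' a / g' a`, is continuous on
`[a, b]`, and the endpoint condition `f' b / g' b = F a` turns its left derivative at `b` into
`g' b / (g b - g a) * (F a - F b)`. So if `F a < F b`, then `F` climbs above `F b` just left of
`b`, and the intermediate value theorem followed by Rolle gives a critical point of `F` in
`(a, b)`; symmetrically if `F a > F b`, and Rolle directly if `F a = F b`. A critical point of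
`F` is exactly a point `ξ` with `F ξ = f' ξ / g' ξ`.
-/

theorem exists_mem_Ioo_lt_of_hasDerivWithinAt_neg {F : ℝ → ℝ} {a b D : ℝ} (hab : a < b)
    (hF : HasDerivWithinAt F D (Icc a b) b) (hD : D < 0) : ∃ c ∈ Ioo a b, F b < F c := by
  have hslope : ∀ᶠ c in 𝓝[<] b, slope F b c < 0 := by
    simpa [Icc_sdiff_right, nhdsWithin_Ico_eq_nhdsLT hab] using hF.limsup_slope_le hD
  obtain ⟨c, hc, hcI⟩ := (hslope.and (Ioo_mem_nhdsLT hab)).exists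
  refine ⟨c, hcI, ?_⟩
  rw [slope_comm, slope_def_field] at hc
  have := (div_lt_iff₀ (sub_pos.2 hcI.2)).1 hc
  linarith

theorem exists_hasDerivAt_eq_zero_of_lt_of_hasDerivWithinAt_neg {F F' : ℝ → ℝ} {a b D : ℝ}
    (hab : a < b) (hFc : ContinuousOn F (Icc a b)) (hFd : ∀ x ∈ Ioo a b, HasDerivAt F (F' x) x)
    (hFb : HasDerivWithinAt F D (Icc a b) b) (hD : D < 0) (hlt : F a < F b) :
    ∃ ξ ∈ Ioo a b, F' ξ = 0 := by
  obtain ⟨c, hc, hbc⟩ := exists_mem_Ioo_lt_of_hasDerivWithinAt_neg hab hFb hD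
  obtain ⟨d, hd, hdb⟩ :=
    intermediate_value_Ioo hc.1.le (hFc.mono (Icc_subset_Icc_right hc.2.le)) ⟨hlt, hbc⟩
  obtain ⟨ξ, hξ, hξ0⟩ := exists_hasDerivAt_eq_zero (hd.2.trans hc.2)
    (hFc.mono (Icc_subset_Icc_left hd.1.le)) hdb fun x hx => hFd x ⟨hd.1.trans hx.1, hx.2⟩
  exact ⟨ξ, ⟨hd.1.trans hξ.1, hξ.2⟩, hξ0⟩

theorem exists_hasDerivAt_eq_zero_of_hasDerivWithinAt_eq_mul_sub {F F' : ℝ → ℝ} {a b c : ℝ}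
    (hab : a < b) (hFc : ContinuousOn F (Icc a b)) (hFd : ∀ x ∈ Ioo a b, HasDerivAt F (F' x) x)
    (hc : 0 < c) (hFb : HasDerivWithinAt F (c * (F a - F b)) (Icc a b) b) :
    ∃ ξ ∈ Ioo a b, F' ξ = 0 := by
  wlog hle : F a ≤ F b generalizing F F'
  · obtain ⟨ξ, hξ, hξ0⟩ := this hFc.neg (fun x hx => (hFd x hx).neg)
      (hFb.neg.congr_deriv (by simp only [Pi.neg_apply]; ring)) (by simpa using (not_le.1 hle).le)
    exact ⟨ξ, hξ, neg_eq_zero.1 hξ0⟩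
  rcases hle.eq_or_lt with heq | hlt
  · exact exists_hasDerivAt_eq_zero hab hFc heq hFd
  · exact exists_hasDerivAt_eq_zero_of_lt_of_hasDerivWithinAt_neg hab hFc hFd hFb
      (mul_neg_of_pos_of_neg hc (sub_neg.2 hlt)) hlt

theorem HasDerivWithinAt.tendsto_sub_div_sub {f g : ℝ → ℝ} {f' g' a : ℝ} {s : Set ℝ}
    (hf : HasDerivWithinAt f f' s a) (hg : HasDerivWithinAt g g' s a) (hg' : g' ≠ 0) :
    Tendsto (fun x => (f x - f a) / (g x - g a)) (𝓝[s \ {a}] a) (𝓝 (f' / g')) := by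
  refine ((hasDerivWithinAt_iff_tendsto_slope.1 hf).div
    (hasDerivWithinAt_iff_tendsto_slope.1 hg) hg').congr' ?_
  filter_upwards [self_mem_nhdsWithin] with x hx
  rw [Pi.div_apply, slope_def_field, slope_def_field,
    div_div_div_cancel_right₀ (sub_ne_zero.2 hx.2)]

theorem continuousOn_update_sub_div_sub {f g : ℝ → ℝ} {f' g' a : ℝ} {s : Set ℝ}
    (hfc : ContinuousOn f s) (hgc : ContinuousOn g s) (hf : HasDerivWithinAt f f' s a)
    (hg : HasDerivWithinAt g g' s a) (hg' : g' ≠ 0) (hne : ∀ x ∈ s, x ≠ a → g x ≠ g a) :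
    ContinuousOn (update (fun x => (f x - f a) / (g x - g a)) a (f' / g')) s := by
  intro x hx
  rcases eq_or_ne x a with rfl | hxa
  · exact continuousWithinAt_update_same.2 (hf.tendsto_sub_div_sub hg hg')
  · exact (continuousWithinAt_update_of_ne hxa).2 (((hfc x hx).sub continuousWithinAt_const).div
      ((hgc x hx).sub continuousWithinAt_const) (sub_ne_zero.2 (hne x hx hxa)))

theorem exists_sub_div_sub_eq_div_of_deriv_pos {f f' g g' : ℝ → ℝ} {a b : ℝ} (hab : a < b)
    (hf : ∀ x ∈ Icc a b, HasDerivWithinAt f (f' x) (Icc a b) x)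
    (hg : ∀ x ∈ Icc a b, HasDerivWithinAt g (g' x) (Icc a b) x)
    (hg' : ∀ x ∈ Icc a b, 0 < g' x) (hend : f' a / g' a = f' b / g' b) :
    ∃ ξ ∈ Ioo a b, (f ξ - f a) / (g ξ - g a) = f' ξ / g' ξ := by
  have haI : a ∈ Icc a b := left_mem_Icc.2 hab.le
  have hbI : b ∈ Icc a b := right_mem_Icc.2 hab.le
  have hb : b ∈ Ioc a b := ⟨hab, le_rfl⟩
  have hmono : StrictMonoOn g (Icc a b) :=
    strictMonoOn_of_hasDerivWithinAt_pos (convex_Icc a b)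
      (fun x hx => (hg x hx).continuousWithinAt)
      (fun x hx => (hg x (interior_subset hx)).mono interior_subset)
      (fun x hx => hg' x (interior_subset hx))
  have hgpos : ∀ x ∈ Ioc a b, 0 < g x - g a := fun x hx =>
    sub_pos.2 (hmono haI (Ioc_subset_Icc_self hx) hx.1)
  set q : ℝ → ℝ := fun x => (f x - f a) / (g x - g a)
  set F := update q a (f' a / g' a)
  have hq : ∀ x ∈ Ioc a b, HasDerivWithinAt q
      ((f' x * (g x - g a) - (f x - f a) * g' x) / (g x - g a) ^ 2) (Icc a b) x := fun x hx =>
    ((hf x (Ioc_subset_Icc_self hx)).sub_const _).div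
      ((hg x (Ioc_subset_Icc_self hx)).sub_const _) (hgpos x hx).ne'
  have hFq : ∀ x ∈ Ioc a b, F =ᶠ[𝓝 x] q := fun x hx =>
    (eventually_ne_nhds hx.1.ne').mono fun y hy => update_of_ne hy _ _
  have hFc : ContinuousOn F (Icc a b) :=
    continuousOn_update_sub_div_sub (fun x hx => (hf x hx).continuousWithinAt)
      (fun x hx => (hg x hx).continuousWithinAt) (hf a haI) (hg a haI) (hg' a haI).ne'
      fun x hx hxa => sub_ne_zero.1 (hgpos x ⟨hx.1.lt_of_ne' hxa, hx.2⟩).ne'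
  have hFd : ∀ x ∈ Ioo a b, HasDerivAt F
      ((f' x * (g x - g a) - (f x - f a) * g' x) / (g x - g a) ^ 2) x := fun x hx =>
    ((hq x (Ioo_subset_Ioc_self hx)).hasDerivAt (Icc_mem_nhds hx.1 hx.2)).congr_of_eventuallyEq
      (hFq x (Ioo_subset_Ioc_self hx))
  have hFb : HasDerivWithinAt F (g' b / (g b - g a) * (F a - F b)) (Icc a b) b := by
    refine ((hq b hb).congr_of_eventuallyEq (nhdsWithin_le_nhds (hFq b hb))
      (hFq b hb).eq_of_nhds).congr_deriv ?_
    rw [show F a = f' a / g' a from update_self .., (hFq b hb).eq_of_nhds, hend]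
    simp only [q]
    field_simp [(hgpos b hb).ne', (hg' b hbI).ne']
  obtain ⟨ξ, hξ, hξ0⟩ := exists_hasDerivAt_eq_zero_of_hasDerivWithinAt_eq_mul_sub hab hFc hFd
    (div_pos (hg' b hbI) (hgpos b hb)) hFb
  refine ⟨ξ, hξ, ?_⟩
  have hΔ := (hgpos ξ (Ioo_subset_Ioc_self hξ)).ne'
  rw [div_eq_div_iff hΔ (hg' ξ (Ioo_subset_Icc_self hξ)).ne']
  rw [div_eq_zero_iff, sub_eq_zero] at hξ0
  exact (hξ0.resolve_right (pow_ne_zero 2 hΔ)).symm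

/-- Cauchy version of Flett's theorem. -/
theorem flett_cauchy (f f' g g' : ℝ → ℝ) (a b : ℝ) (hab : a < b)
    (hf : ∀ x ∈ Set.Icc a b, HasDerivWithinAt f (f' x) (Set.Icc a b) x)
    (hg : ∀ x ∈ Set.Icc a b, HasDerivWithinAt g (g' x) (Set.Icc a b) x)
    (hg' : ∀ x ∈ Set.Icc a b, g' x ≠ 0)
    (hend : f' a / g' a = f' b / g' b) :
    ∃ ξ ∈ Set.Ioo a b, (f ξ - f a) / (g ξ - g a) = f' ξ / g' ξ := by
  rcases hasDerivWithinAt_forall_lt_or_forall_gt_of_forall_ne (convex_Icc a b) hg hg' with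
    hneg | hpos
  · obtain ⟨ξ, hξ, h⟩ := exists_sub_div_sub_eq_div_of_deriv_pos (f := -f) (g := -g) hab
      (fun x hx => (hf x hx).neg) (fun x hx => (hg x hx).neg) (fun x hx => neg_pos.2 (hneg x hx))
      (by simpa only [Pi.neg_apply, neg_div_neg_eq] using hend)
    refine ⟨ξ, hξ, ?_⟩
    simpa only [Pi.neg_apply, neg_sub_neg, neg_div_neg_eq, ← neg_sub (f a), ← neg_sub (g a)]
      using h
  · exact exists_sub_div_sub_eq_div_of_deriv_pos hab hf hg hpos hend
end
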